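/- arXiv:1902.06429 — 4 statements merged into one kernel-verified Lean document; each statement's English description precedes it below -/
import Mathlib

section
/- Let n ≥ 0 be an integer and let r₁, r₂, r₃ be real numbers with r₁ > 0 and r₂² + r₃ > 0. Then the integral J_n(r₁,r₂,r₃) = ∫₀^∞ y^{n-2} H_n(√π (r₁ y + r₂ y⁻¹)) e^{-π (r₁ y + r₂ y⁻¹)² - π r₃ y⁻²} dy converges and equals 2^{n-1} π^{n/2} ((r₂² + r₃)^{1/2} + r₂)^n (r₂² + r₃)^{-1/2} e^{-2π r₁ ((r₂² + r₃)^{1/2} + r₂)}. -/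
open MeasureTheory Real

/-- Physicists' Hermite polynomial `H_n(x) = (-1)^n e^{x²} (d/dx)^n e^{-x²}`. -/
noncomputable def physHermite (n : ℕ) (x : ℝ) : ℝ :=
  (-1) ^ n * Real.exp (x ^ 2) * iteratedDeriv n (fun y => Real.exp (-y ^ 2)) x

/-!
Write `s = √(r₂² + r₃)`. For `c, s > 0` the map `y ↦ c y - s y⁻¹` is an increasing bijection
`(0, ∞) → ℝ`, so `∫₀^∞ (c + s y⁻²) e^{-π (c y - s y⁻¹)²} dy = ∫ e^{-π x²} dx = 1`, and the
substitution `y ↦ s / (c y)` shows that the two summands contribute equally. Completing the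
square then gives `J₀ = e^{-2π r₁ (s + r₂)} / (2 s)`.

Since `(H_n(x) e^{-x²})' = -H_{n+1}(x) e^{-x²}`, differentiating under the integral sign gives
`∂J_n/∂r₁ = -√π J_{n+1}`, while the closed form `V_n` satisfies
`∂V_n/∂r₁ = -2π (s + r₂) V_n = -√π V_{n+1}`; induction on `n` concludes. Differentiation under the
integral sign is justified by the bound `|H_n(x)| ≤ C e^{δ x²}`, valid for every `δ > 0`.
-/

open Set Filter Topology Polynomial Metric
open scoped Nat ZeroAtInfty

theorem Real.exp_neg_le_factorial_div_pow {x : ℝ} (hx : 0 < x) (m : ℕ) :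
    exp (-x) ≤ m ! / x ^ m := by
  rw [exp_neg, inv_le_comm₀ (exp_pos x) (by positivity), inv_div]
  exact pow_div_factorial_le_exp x hx.le m

theorem Polynomial.tendsto_eval_mul_exp_neg_mul_sq_cocompact (p : ℝ[X]) {δ : ℝ}
    (hδ : 0 < δ) :
    Tendsto (fun x => p.eval x * exp (-δ * x ^ 2)) (cocompact ℝ) (𝓝 0) := by
  induction p using Polynomial.induction_on' with
  | monomial n c =>
    rw [tendsto_zero_iff_abs_tendsto_zero]
    convert (tendsto_rpow_abs_mul_exp_neg_mul_sq_cocompact hδ n).const_mul |c| using 2 with x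
    · simp [abs_mul, mul_assoc, abs_of_pos (exp_pos _)]
    · simp
  | add p q hp hq => simpa [add_mul] using hp.add hq

theorem Polynomial.exists_abs_eval_le_mul_exp_mul_sq (p : ℝ[X]) {δ : ℝ} (hδ : 0 < δ) :
    ∃ C, ∀ x, |p.eval x| ≤ C * exp (δ * x ^ 2) := by
  let g : C₀(ℝ, ℝ) := ⟨⟨fun x => p.eval x * exp (-δ * x ^ 2), by fun_prop⟩,
    p.tendsto_eval_mul_exp_neg_mul_sq_cocompact hδ⟩
  obtain ⟨C, hC⟩ := g.isBounded_range.exists_norm_le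
  refine ⟨C, fun x => ?_⟩
  have hgx : |p.eval x| * exp (-δ * x ^ 2) ≤ C := by
    simpa [g, abs_mul, abs_of_pos (exp_pos _)] using hC _ (mem_range_self x)
  calc |p.eval x| = |p.eval x| * exp (-δ * x ^ 2) * exp (δ * x ^ 2) := by
        rw [mul_assoc, ← exp_add, neg_mul, neg_add_cancel, exp_zero, mul_one]
    _ ≤ C * exp (δ * x ^ 2) := by gcongr

theorem integrableOn_rpow_mul_exp_neg_mul_sq_sub_mul_inv_sq {a b : ℝ} (ha : 0 < a) (hb : 0 < b)
    (k : ℝ) : IntegrableOn (fun y : ℝ => y ^ k * exp (-a * y ^ 2 - b * y⁻¹ ^ 2)) (Ioi 0) := by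
  obtain ⟨m, hm⟩ := exists_nat_gt (-k / 2)
  -- `e^{-b y⁻²} ≤ m! b⁻ᵐ y²ᵐ` makes the exponent of `y` larger than `-1`
  have hbound := (integrableOn_rpow_mul_exp_neg_mul_sq ha (s := k + 2 * m) (by linarith)).const_mul
    (m ! / b ^ m)
  refine hbound.mono' ?_ ?_
  · refine ContinuousOn.aestronglyMeasurable ?_ measurableSet_Ioi
    have hinv : ContinuousOn (fun y : ℝ => y⁻¹) (Ioi 0) :=
      continuousOn_inv₀.mono fun y hy => ne_of_gt hy
    exact (continuousOn_id.rpow_const fun y hy => Or.inl (ne_of_gt hy)).mul (by fun_prop)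
  · filter_upwards [ae_restrict_mem measurableSet_Ioi] with y (hy : 0 < y)
    have hdecay := exp_neg_le_factorial_div_pow (by positivity : 0 < b * y⁻¹ ^ 2) m
    rw [Real.norm_eq_abs, abs_of_nonneg (by positivity), sub_eq_add_neg, exp_add,
      rpow_add hy, rpow_mul hy.le]
    calc y ^ k * (exp (-a * y ^ 2) * exp (-(b * y⁻¹ ^ 2)))
        ≤ y ^ k * (exp (-a * y ^ 2) * (m ! / (b * y⁻¹ ^ 2) ^ m)) := by gcongr
      _ = m ! / b ^ m * (y ^ k * (y ^ (2:ℝ)) ^ (m:ℝ) * exp (-a * y ^ 2)) := by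
        rw [rpow_two, rpow_natCast, mul_pow, inv_pow, inv_pow]; field_simp

theorem exp_neg_pi_mul_sq_sub {c s y : ℝ} (hy : y ≠ 0) :
    exp (-π * (c * y - s * y⁻¹) ^ 2) =
      exp (2 * π * c * s) * exp (-(π * c ^ 2) * y ^ 2 - π * s ^ 2 * y⁻¹ ^ 2) := by
  rw [← exp_add]
  congr 1
  linear_combination (2 * π * c * s) * mul_inv_cancel₀ hy

theorem integrableOn_rpow_mul_exp_neg_pi_mul_sq_sub {c s : ℝ} (hc : 0 < c) (hs : 0 < s)
    (k : ℝ) :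
    IntegrableOn (fun y : ℝ => y ^ k * exp (-π * (c * y - s * y⁻¹) ^ 2)) (Ioi 0) := by
  refine IntegrableOn.congr_fun ((integrableOn_rpow_mul_exp_neg_mul_sq_sub_mul_inv_sq
    (by positivity : 0 < π * c ^ 2) (by positivity : 0 < π * s ^ 2) k).const_mul
    (exp (2 * π * c * s))) (fun y (hy : 0 < y) => ?_) measurableSet_Ioi
  rw [exp_neg_pi_mul_sq_sub hy.ne', mul_left_comm]

theorem image_mul_sub_mul_inv_Ioi {c s : ℝ} (hc : 0 < c) (hs : 0 < s) :
    (fun y => c * y - s * y⁻¹) '' Ioi 0 = univ := by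
  refine eq_univ_of_forall fun t => ?_
  set d := √(t ^ 2 + 4 * c * s)
  have hd : d ^ 2 = t ^ 2 + 4 * c * s := sq_sqrt (by positivity)
  have hdt : |t| < d := by
    rw [← sqrt_sq_eq_abs]; exact sqrt_lt_sqrt (sq_nonneg _) (by linarith [mul_pos hc hs])
  set y := (t + d) / (2 * c) with hy_def
  have hy : 0 < y := div_pos (by linarith [neg_abs_le t]) (by positivity)
  have hroot : c * y ^ 2 - t * y - s = 0 := by
    rw [hy_def]; field_simp; linear_combination hd
  refine ⟨y, hy, ?_⟩
  field_simp
  linear_combination hroot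

theorem integral_deriv_mul_exp_neg_pi_mul_sq_sub {c s : ℝ} (hc : 0 < c) (hs : 0 < s) :
    ∫ y in Ioi 0, (c + s * y⁻¹ ^ 2) * exp (-π * (c * y - s * y⁻¹) ^ 2) = 1 := by
  have hderiv : ∀ y ∈ Ioi (0 : ℝ),
      HasDerivWithinAt (fun y => c * y - s * y⁻¹) (c + s * y⁻¹ ^ 2) (Ioi 0) y := by
    intro y (hy : 0 < y)
    refine (((hasDerivAt_id y).const_mul c).sub ((hasDerivAt_inv hy.ne').const_mul s)).congr_deriv
      ?_ |>.hasDerivWithinAt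
    simp [inv_pow]
  have hmono : StrictMonoOn (fun y => c * y - s * y⁻¹) (Ioi 0) := by
    intro u (hu : 0 < u) v (hv : 0 < v) huv
    have := inv_strictAnti₀ hu huv
    dsimp only
    nlinarith
  have := integral_image_eq_integral_abs_deriv_smul measurableSet_Ioi hderiv hmono.injOn
    (fun x => exp (-π * x ^ 2))
  rw [image_mul_sub_mul_inv_Ioi hc hs, setIntegral_univ, integral_gaussian,
    div_self pi_ne_zero, sqrt_one] at this
  rw [this]
  refine setIntegral_congr_fun measurableSet_Ioi fun y (hy : 0 < y) => ?_
  rw [smul_eq_mul, abs_of_pos (by positivity)]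

theorem integral_inv_sq_mul_exp_neg_pi_mul_sq_sub_eq_div_mul {c s : ℝ} (hc : 0 < c)
    (hs : 0 < s) :
    ∫ y in Ioi 0, y⁻¹ ^ 2 * exp (-π * (c * y - s * y⁻¹) ^ 2) =
      c / s * ∫ y in Ioi 0, exp (-π * (c * y - s * y⁻¹) ^ 2) := by
  have hinv := integral_comp_rpow_Ioi (fun y => exp (-π * (s * y - c * y⁻¹) ^ 2))
    (p := -1) (by norm_num)
  have hscale := integral_comp_mul_left_Ioi (fun y => exp (-π * (s * y - c * y⁻¹) ^ 2)) 0
    (div_pos hc hs)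
  rw [mul_zero, smul_eq_mul] at hscale
  calc ∫ y in Ioi 0, y⁻¹ ^ 2 * exp (-π * (c * y - s * y⁻¹) ^ 2)
      = ∫ y in Ioi 0, exp (-π * (s * y - c * y⁻¹) ^ 2) := by
        rw [← hinv]
        refine setIntegral_congr_fun measurableSet_Ioi fun y (hy : 0 < y) => ?_
        rw [abs_neg, abs_one, one_mul, smul_eq_mul, rpow_neg_one, inv_inv, ← neg_sub (c * y),
          neg_sq, show (-1 - 1 : ℝ) = -2 by norm_num, rpow_neg_ofNat, zpow_neg, zpow_ofNat,
          inv_pow]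
    _ = c / s * ∫ y in Ioi 0, exp (-π * (s * (c / s * y) - c * (c / s * y)⁻¹) ^ 2) := by
        rw [hscale, ← mul_assoc, mul_inv_cancel₀ (by positivity), one_mul]
    _ = c / s * ∫ y in Ioi 0, exp (-π * (c * y - s * y⁻¹) ^ 2) := by
        congr 1
        refine setIntegral_congr_fun measurableSet_Ioi fun y (hy : 0 < y) => ?_
        field_simp

theorem integral_inv_sq_mul_exp_neg_pi_mul_sq_sub {c s : ℝ} (hc : 0 < c) (hs : 0 < s) :
    ∫ y in Ioi 0, y⁻¹ ^ 2 * exp (-π * (c * y - s * y⁻¹) ^ 2) = (2 * s)⁻¹ := by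
  have h₁ : IntegrableOn (fun y => exp (-π * (c * y - s * y⁻¹) ^ 2)) (Ioi 0) := by
    simpa using integrableOn_rpow_mul_exp_neg_pi_mul_sq_sub hc hs 0
  have h₂ : IntegrableOn (fun y => y⁻¹ ^ 2 * exp (-π * (c * y - s * y⁻¹) ^ 2)) (Ioi 0) := by
    simpa [rpow_neg_ofNat] using integrableOn_rpow_mul_exp_neg_pi_mul_sq_sub hc hs (-2)
  have hsum := integral_deriv_mul_exp_neg_pi_mul_sq_sub hc hs
  simp only [add_mul, mul_assoc] at hsum
  rw [integral_add (h₁.const_mul c) (h₂.const_mul s), integral_const_mul, integral_const_mul,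
    integral_inv_sq_mul_exp_neg_pi_mul_sq_sub_eq_div_mul hc hs] at hsum
  rw [integral_inv_sq_mul_exp_neg_pi_mul_sq_sub_eq_div_mul hc hs]
  generalize (∫ y in Ioi 0, exp (-π * (c * y - s * y⁻¹) ^ 2)) = I at hsum ⊢
  field_simp at hsum ⊢
  linear_combination hsum

theorem exp_sq_mul_exp_neg_sq (x : ℝ) : exp (x ^ 2) * exp (-x ^ 2) = 1 := by
  rw [← exp_add, add_neg_cancel, exp_zero]

theorem physHermite_mul_exp_neg_sq (n : ℕ) (x : ℝ) :
    physHermite n x * exp (-x ^ 2) = (-1) ^ n * iteratedDeriv n (fun y => exp (-y ^ 2)) x := by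
  rw [physHermite]
  linear_combination
    ((-1) ^ n * iteratedDeriv n (fun y => exp (-y ^ 2)) x) * exp_sq_mul_exp_neg_sq x

theorem hasDerivAt_physHermite_mul_exp_neg_sq (n : ℕ) (x : ℝ) :
    HasDerivAt (fun x => physHermite n x * exp (-x ^ 2))
      (-(physHermite (n + 1) x * exp (-x ^ 2))) x := by
  have hsmooth : ContDiff ℝ ⊤ (fun y : ℝ => exp (-y ^ 2)) := by fun_prop
  have := (hsmooth.differentiable_iteratedDeriv n (WithTop.coe_lt_top _) x).hasDerivAt.const_mul
    ((-1 : ℝ) ^ n)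
  simp only [physHermite_mul_exp_neg_sq, ← iteratedDeriv_succ] at this ⊢
  refine this.congr_deriv ?_
  rw [pow_succ]
  ring

theorem physHermite_eq_aeval_hermite (n : ℕ) (x : ℝ) :
    physHermite n x = √2 ^ n * aeval (√2 * x) (hermite n) := by
  have hgauss : (fun y : ℝ => exp (-y ^ 2)) = fun y => exp (-((√2 * y) ^ 2 / 2)) := by
    ext y; rw [mul_pow, sq_sqrt zero_le_two]; ring_nf
  have hsmooth : ContDiff ℝ n (fun y : ℝ => exp (-(y ^ 2 / 2))) := by fun_prop
  rw [physHermite, hgauss, iteratedDeriv_comp_const_mul hsmooth, iteratedDeriv_eq_iterate]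
  beta_reduce
  rw [deriv_gaussian_eq_hermite_mul_gaussian, mul_pow, sq_sqrt zero_le_two]
  have hexp : exp (x ^ 2) * exp (-(2 * x ^ 2 / 2)) = 1 := by
    rw [← exp_sq_mul_exp_neg_sq x]; ring_nf
  have hsign : ((-1 : ℝ) ^ n) * (-1) ^ n = 1 := by rw [← mul_pow]; norm_num
  linear_combination
    (√2 ^ n * aeval (√2 * x) (hermite n)) * ((-1) ^ n * (-1) ^ n * hexp + hsign)

theorem physHermite_zero (x : ℝ) : physHermite 0 x = 1 := by
  simp [physHermite, ← exp_add]

theorem exists_physHermite_eq_eval (n : ℕ) : ∃ p : ℝ[X], ∀ x, physHermite n x = p.eval x :=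
  ⟨C (√2 ^ n) * ((hermite n).map (Int.castRingHom ℝ)).comp (C √2 * X), fun x => by
    simp [physHermite_eq_aeval_hermite, aeval_def, eval_map]⟩

theorem continuous_physHermite (n : ℕ) : Continuous (physHermite n) := by
  obtain ⟨p, hp⟩ := exists_physHermite_eq_eval n
  simpa [funext hp] using p.continuous

theorem exists_abs_physHermite_le_mul_exp_mul_sq (n : ℕ) {δ : ℝ} (hδ : 0 < δ) :
    ∃ C, ∀ x, |physHermite n x| ≤ C * exp (δ * x ^ 2) := by
  obtain ⟨p, hp⟩ := exists_physHermite_eq_eval n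
  simpa [hp] using p.exists_abs_eval_le_mul_exp_mul_sq hδ

noncomputable def hermiteJIntegrand (n : ℕ) (r₂ r₃ t y : ℝ) : ℝ :=
  y ^ ((n : ℝ) - 2) * physHermite n (√π * (t * y + r₂ * y⁻¹)) *
    exp (-π * (t * y + r₂ * y⁻¹) ^ 2 - π * r₃ * y⁻¹ ^ 2)

theorem hermiteJIntegrand_eq (n : ℕ) (r₂ r₃ t y : ℝ) :
    hermiteJIntegrand n r₂ r₃ t y = y ^ ((n : ℝ) - 2) * exp (-π * r₃ * y⁻¹ ^ 2) *
      (physHermite n (√π * (t * y + r₂ * y⁻¹)) * exp (-(√π * (t * y + r₂ * y⁻¹)) ^ 2)) := by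
  have hsplit : exp (-π * (t * y + r₂ * y⁻¹) ^ 2 - π * r₃ * y⁻¹ ^ 2) =
      exp (-π * r₃ * y⁻¹ ^ 2) * exp (-(√π * (t * y + r₂ * y⁻¹)) ^ 2) := by
    rw [← exp_add, mul_pow, sq_sqrt pi_pos.le]; ring_nf
  rw [hermiteJIntegrand, hsplit]
  ring

theorem continuousOn_hermiteJIntegrand (n : ℕ) (r₂ r₃ t : ℝ) :
    ContinuousOn (hermiteJIntegrand n r₂ r₃ t) (Ioi 0) := by
  have hinv : ContinuousOn (fun y : ℝ => y⁻¹) (Ioi 0) :=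
    continuousOn_inv₀.mono fun y hy => ne_of_gt hy
  have hpow : ContinuousOn (fun y : ℝ => y ^ ((n : ℝ) - 2)) (Ioi 0) :=
    continuousOn_id.rpow_const fun y hy => Or.inl (ne_of_gt hy)
  have := continuous_physHermite n
  unfold hermiteJIntegrand
  fun_prop

theorem hasDerivAt_hermiteJIntegrand (n : ℕ) (r₂ r₃ t : ℝ) {y : ℝ} (hy : 0 < y) :
    HasDerivAt (fun t => hermiteJIntegrand n r₂ r₃ t y)
      (-√π * hermiteJIntegrand (n + 1) r₂ r₃ t y) t := by
  have hinner : HasDerivAt (fun t => √π * (t * y + r₂ * y⁻¹)) (√π * y) t := by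
    simpa using (((hasDerivAt_id t).mul_const y).add_const (r₂ * y⁻¹)).const_mul √π
  have := ((hasDerivAt_physHermite_mul_exp_neg_sq n _).comp t hinner).const_mul
    (y ^ ((n : ℝ) - 2) * exp (-π * r₃ * y⁻¹ ^ 2))
  simp only [hermiteJIntegrand_eq]
  refine this.congr_deriv ?_
  rw [Nat.cast_succ, add_sub_right_comm, rpow_add_one hy.ne']
  ring

theorem hermiteJ_exponent_le {r₁ r₂ r₃ t y δ : ℝ} (hy : 0 < y)
    (ht : t ∈ ball r₁ (r₁ / 2)) (hδ₀ : 0 ≤ δ) (hδ₁ : δ ≤ 1 / 2)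
    (hδr : δ * r₂ ^ 2 ≤ (r₂ ^ 2 + r₃) / 2) :
    δ * (√π * (t * y + r₂ * y⁻¹)) ^ 2 + (-π * (t * y + r₂ * y⁻¹) ^ 2 - π * r₃ * y⁻¹ ^ 2) ≤
      3 * π * r₁ * |r₂| + (-(π * r₁ ^ 2 / 8) * y ^ 2 - π * (r₂ ^ 2 + r₃) / 2 * y⁻¹ ^ 2) := by
  rw [mem_ball, dist_eq, abs_lt] at ht
  have hsq : (t * y + r₂ * y⁻¹) ^ 2 = t ^ 2 * y ^ 2 + 2 * t * r₂ + r₂ ^ 2 * y⁻¹ ^ 2 := by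
    linear_combination (2 * t * r₂) * mul_inv_cancel₀ hy.ne'
  have hA : r₁ ^ 2 / 8 * y ^ 2 ≤ (1 - δ) * t ^ 2 * y ^ 2 := by
    gcongr; nlinarith
  have hB : (r₂ ^ 2 + r₃) / 2 * y⁻¹ ^ 2 ≤ ((1 - δ) * r₂ ^ 2 + r₃) * y⁻¹ ^ 2 := by
    gcongr; linarith
  have hC : -((1 - δ) * (2 * t * r₂)) ≤ 3 * r₁ * |r₂| := by
    have ht₀ : 0 ≤ t := by linarith
    have h₁ := mul_le_mul_of_nonneg_left (neg_le_abs r₂) (by nlinarith : 0 ≤ (1 - δ) * (2 * t))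
    have h₂ : (1 - δ) * (2 * t) ≤ 3 * r₁ := by nlinarith
    nlinarith [mul_le_mul_of_nonneg_right h₂ (abs_nonneg r₂)]
  rw [mul_pow, sq_sqrt pi_pos.le, hsq]
  nlinarith [pi_pos]

theorem exists_abs_hermiteJIntegrand_le (n : ℕ) {r₁ r₂ r₃ : ℝ} (hr : 0 < r₂ ^ 2 + r₃) :
    ∃ C, ∀ t ∈ ball r₁ (r₁ / 2), ∀ y ∈ Ioi (0 : ℝ), |hermiteJIntegrand n r₂ r₃ t y| ≤
      C * (y ^ ((n : ℝ) - 2) *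
        exp (-(π * r₁ ^ 2 / 8) * y ^ 2 - π * (r₂ ^ 2 + r₃) / 2 * y⁻¹ ^ 2)) := by
  -- small enough that the factor `e^{-(1 - δ) x²}` left over from `e^{-x²}` still decays in `y⁻¹`
  set δ := (r₂ ^ 2 + r₃) / (2 * (r₂ ^ 2 + r₃ + r₂ ^ 2)) with hδ
  have hδ₀ : 0 < δ := by positivity
  have hδ₁ : δ ≤ 1 / 2 := by
    rw [hδ, div_le_iff₀ (by positivity)]; nlinarith [sq_nonneg r₂]
  have hδr : δ * r₂ ^ 2 ≤ (r₂ ^ 2 + r₃) / 2 := by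
    rw [hδ, div_mul_eq_mul_div, div_le_iff₀ (by positivity)]; nlinarith [sq_nonneg r₂]
  obtain ⟨C, hC⟩ := exists_abs_physHermite_le_mul_exp_mul_sq n hδ₀
  have hC₀ : 0 ≤ C := by simpa using (abs_nonneg _).trans (hC 0)
  refine ⟨C * exp (3 * π * r₁ * |r₂|), fun t ht y (hy : 0 < y) => ?_⟩
  set x := √π * (t * y + r₂ * y⁻¹)
  rw [hermiteJIntegrand, abs_mul, abs_mul, abs_of_nonneg (rpow_nonneg hy.le _),
    abs_of_pos (exp_pos _)]
  calc y ^ ((n : ℝ) - 2) * |physHermite n x| *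
        exp (-π * (t * y + r₂ * y⁻¹) ^ 2 - π * r₃ * y⁻¹ ^ 2)
      ≤ y ^ ((n : ℝ) - 2) * (C * exp (δ * x ^ 2)) *
        exp (-π * (t * y + r₂ * y⁻¹) ^ 2 - π * r₃ * y⁻¹ ^ 2) := by gcongr; exact hC x
    _ = C * (y ^ ((n : ℝ) - 2) *
        exp (δ * x ^ 2 + (-π * (t * y + r₂ * y⁻¹) ^ 2 - π * r₃ * y⁻¹ ^ 2))) := by
      rw [exp_add]; ring
    _ ≤ C * (y ^ ((n : ℝ) - 2) * exp (3 * π * r₁ * |r₂| +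
        (-(π * r₁ ^ 2 / 8) * y ^ 2 - π * (r₂ ^ 2 + r₃) / 2 * y⁻¹ ^ 2))) := by
      gcongr C * (_ * exp ?_)
      exact hermiteJ_exponent_le hy ht hδ₀.le hδ₁ hδr
    _ = _ := by rw [exp_add]; ring

theorem integrableOn_hermiteJIntegrand (n : ℕ) {r₁ r₂ r₃ : ℝ} (hr₁ : 0 < r₁)
    (hr : 0 < r₂ ^ 2 + r₃) : IntegrableOn (hermiteJIntegrand n r₂ r₃ r₁) (Ioi 0) := by
  obtain ⟨C, hC⟩ := exists_abs_hermiteJIntegrand_le n (r₁ := r₁) hr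
  refine ((integrableOn_rpow_mul_exp_neg_mul_sq_sub_mul_inv_sq
    (by positivity : 0 < π * r₁ ^ 2 / 8) (by positivity : 0 < π * (r₂ ^ 2 + r₃) / 2)
    ((n : ℝ) - 2)).const_mul C).mono'
    ((continuousOn_hermiteJIntegrand n r₂ r₃ r₁).aestronglyMeasurable measurableSet_Ioi) ?_
  filter_upwards [ae_restrict_mem measurableSet_Ioi] with y hy
  exact hC r₁ (mem_ball_self (half_pos hr₁)) y hy

theorem hasDerivAt_integral_hermiteJIntegrand (n : ℕ) {r₁ r₂ r₃ : ℝ} (hr₁ : 0 < r₁)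
    (hr : 0 < r₂ ^ 2 + r₃) :
    HasDerivAt (fun t => ∫ y in Ioi 0, hermiteJIntegrand n r₂ r₃ t y)
      (-√π * ∫ y in Ioi 0, hermiteJIntegrand (n + 1) r₂ r₃ r₁ y) r₁ := by
  obtain ⟨C, hC⟩ := exists_abs_hermiteJIntegrand_le (n + 1) (r₁ := r₁) hr
  rw [← integral_const_mul]
  refine (hasDerivAt_integral_of_dominated_loc_of_deriv_le
    (F' := fun t y => -√π * hermiteJIntegrand (n + 1) r₂ r₃ t y)
    (ball_mem_nhds r₁ (half_pos hr₁))
    (Eventually.of_forall fun t =>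
      (continuousOn_hermiteJIntegrand n r₂ r₃ t).aestronglyMeasurable measurableSet_Ioi)
    (integrableOn_hermiteJIntegrand n hr₁ hr)
    (((continuousOn_hermiteJIntegrand (n + 1) r₂ r₃ r₁).aestronglyMeasurable
      measurableSet_Ioi).const_mul _) ?_
    ((integrableOn_rpow_mul_exp_neg_mul_sq_sub_mul_inv_sq (by positivity : 0 < π * r₁ ^ 2 / 8)
      (by positivity : 0 < π * (r₂ ^ 2 + r₃) / 2) ((↑(n + 1) : ℝ) - 2)).const_mul (√π * C))
    ?_).2
  · filter_upwards [ae_restrict_mem measurableSet_Ioi] with y hy t ht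
    rw [norm_mul, norm_neg, Real.norm_eq_abs, abs_of_nonneg (sqrt_nonneg _), mul_assoc]
    exact mul_le_mul_of_nonneg_left (hC t ht y hy) (sqrt_nonneg _)
  · filter_upwards [ae_restrict_mem measurableSet_Ioi] with y hy t _
    exact hasDerivAt_hermiteJIntegrand n r₂ r₃ t hy

noncomputable def hermiteJValue (n : ℕ) (r₂ r₃ t : ℝ) : ℝ :=
  2 ^ ((n : ℝ) - 1) * π ^ ((n : ℝ) / 2) * (√(r₂ ^ 2 + r₃) + r₂) ^ n * (√(r₂ ^ 2 + r₃))⁻¹ *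
    exp (-2 * π * t * (√(r₂ ^ 2 + r₃) + r₂))

theorem hasDerivAt_hermiteJValue (n : ℕ) (r₂ r₃ t : ℝ) :
    HasDerivAt (hermiteJValue n r₂ r₃)
      (-2 * π * (√(r₂ ^ 2 + r₃) + r₂) * hermiteJValue n r₂ r₃ t) t := by
  have := (((hasDerivAt_id' t).const_mul (-2 * π)).mul_const (√(r₂ ^ 2 + r₃) + r₂)).exp
    |>.const_mul
      (2 ^ ((n : ℝ) - 1) * π ^ ((n : ℝ) / 2) * (√(r₂ ^ 2 + r₃) + r₂) ^ n * (√(r₂ ^ 2 + r₃))⁻¹)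
  refine this.congr_deriv ?_
  rw [hermiteJValue]
  ring

theorem hermiteJValue_succ (n : ℕ) (r₂ r₃ t : ℝ) :
    hermiteJValue (n + 1) r₂ r₃ t =
      2 * √π * (√(r₂ ^ 2 + r₃) + r₂) * hermiteJValue n r₂ r₃ t := by
  have h2 : (2 : ℝ) ^ (((n + 1 : ℕ) : ℝ) - 1) = 2 * 2 ^ ((n : ℝ) - 1) := by
    rw [Nat.cast_succ, add_sub_right_comm, rpow_add_one two_ne_zero, mul_comm]
  have hπ : π ^ (((n + 1 : ℕ) : ℝ) / 2) = √π * π ^ ((n : ℝ) / 2) := by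
    rw [Nat.cast_succ, add_div, rpow_add pi_pos, sqrt_eq_rpow, mul_comm]
  rw [hermiteJValue, hermiteJValue, h2, hπ]
  ring

theorem integral_hermiteJIntegrand_zero {r₂ r₃ t : ℝ} (ht : 0 < t)
    (hr : 0 < r₂ ^ 2 + r₃) :
    ∫ y in Ioi 0, hermiteJIntegrand 0 r₂ r₃ t y = hermiteJValue 0 r₂ r₃ t := by
  set s := √(r₂ ^ 2 + r₃)
  have hs : 0 < s := sqrt_pos.2 hr
  have hs2 : s ^ 2 = r₂ ^ 2 + r₃ := sq_sqrt hr.le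
  have hpt : ∀ y ∈ Ioi (0 : ℝ), hermiteJIntegrand 0 r₂ r₃ t y =
      exp (-2 * π * t * (s + r₂)) * (y⁻¹ ^ 2 * exp (-π * (t * y - s * y⁻¹) ^ 2)) := by
    intro y (hy : 0 < y)
    have hexp : -π * (t * y + r₂ * y⁻¹) ^ 2 - π * r₃ * y⁻¹ ^ 2 =
        -2 * π * t * (s + r₂) + -π * (t * y - s * y⁻¹) ^ 2 := by
      linear_combination
        (-2 * π * t * (s + r₂)) * mul_inv_cancel₀ hy.ne' + (π * y⁻¹ ^ 2) * hs2
    rw [hermiteJIntegrand, physHermite_zero, hexp, exp_add, Nat.cast_zero, zero_sub,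
      rpow_neg_ofNat]
    rw [zpow_neg, zpow_ofNat, mul_one, inv_pow]
    ring
  rw [setIntegral_congr_fun measurableSet_Ioi hpt, integral_const_mul,
    integral_inv_sq_mul_exp_neg_pi_mul_sq_sub ht hs, hermiteJValue]
  rw [Nat.cast_zero, zero_sub, zero_div, rpow_zero, pow_zero, rpow_neg_one]
  ring

theorem integral_hermiteJIntegrand (n : ℕ) {r₂ r₃ t : ℝ} (ht : 0 < t)
    (hr : 0 < r₂ ^ 2 + r₃) :
    ∫ y in Ioi 0, hermiteJIntegrand n r₂ r₃ t y = hermiteJValue n r₂ r₃ t := by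
  induction n generalizing t with
  | zero => exact integral_hermiteJIntegrand_zero ht hr
  | succ n ih =>
    have hJ : (fun t => ∫ y in Ioi 0, hermiteJIntegrand n r₂ r₃ t y) =ᶠ[𝓝 t]
        hermiteJValue n r₂ r₃ :=
      eventually_of_mem (Ioi_mem_nhds ht) fun t' ht' => ih ht'
    have hderiv := (hasDerivAt_integral_hermiteJIntegrand n ht hr).unique
      ((hasDerivAt_hermiteJValue n r₂ r₃ t).congr_of_eventuallyEq hJ)
    have hπ : √π ≠ 0 := (sqrt_pos.2 pi_pos).ne'
    refine mul_left_cancel₀ hπ ?_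
    rw [hermiteJValue_succ]
    linear_combination -hderiv - (2 * (√(r₂ ^ 2 + r₃) + r₂) * hermiteJValue n r₂ r₃ t) *
      mul_self_sqrt pi_pos.le

theorem integral_hermite_J (n : ℕ) (r₁ r₂ r₃ : ℝ) (hr₁ : 0 < r₁) (hr : 0 < r₂ ^ 2 + r₃) :
    IntegrableOn
      (fun y : ℝ =>
        y ^ ((n : ℝ) - 2) * physHermite n (Real.sqrt π * (r₁ * y + r₂ * y⁻¹)) *
          Real.exp (-π * (r₁ * y + r₂ * y⁻¹) ^ 2 - π * r₃ * y⁻¹ ^ 2))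
      (Set.Ioi 0) volume ∧
    ∫ y in Set.Ioi (0 : ℝ),
        y ^ ((n : ℝ) - 2) * physHermite n (Real.sqrt π * (r₁ * y + r₂ * y⁻¹)) *
          Real.exp (-π * (r₁ * y + r₂ * y⁻¹) ^ 2 - π * r₃ * y⁻¹ ^ 2) =
      2 ^ ((n : ℝ) - 1) * π ^ ((n : ℝ) / 2) * (Real.sqrt (r₂ ^ 2 + r₃) + r₂) ^ n *
        (Real.sqrt (r₂ ^ 2 + r₃))⁻¹ *
        Real.exp (-2 * π * r₁ * (Real.sqrt (r₂ ^ 2 + r₃) + r₂)) :=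
  ⟨integrableOn_hermiteJIntegrand n hr₁ hr, integral_hermiteJIntegrand n hr₁ hr⟩
end

section
/- Let k be a field of characteristic different from 2. Set x₀ = [[0,-1],[0,0]] and y₀ = [[-1,0],[0,1]] in the 2×2 matrices M₂(k), and for y ∈ M₂(k) let yᶥ denote its adjugate, so that the bilinear form on M₂(k) is (x, y) = tr(x yᶥ). Then for all x, y ∈ M₂(k) with det x = 0, x ≠ 0, tr(x yᶥ) = 0 and det y = -1, there exist g₁, g₂ ∈ GL₂(k) with det g₁ = det g₂ such that g₁ x g₂⁻¹ = x₀ and g₁ y g₂⁻¹ = y₀. -/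
/-!
Since `det y = -1`, `y` is invertible and `u = x y⁻¹` is a nonzero matrix with `det u = 0` and
`tr u = tr (x adj y) / det y = 0`, i.e. a nonzero nilpotent, hence `P⁻¹ u P = x₀` for some invertible
`P`. Then `g₁ = P⁻¹`, `g₂ = y₀ P⁻¹ y` work: `g₁ y g₂⁻¹ = y₀⁻¹ = y₀`, `g₁ x g₂⁻¹ = x₀ y₀ = x₀`, and
`det g₂ = det y₀ · det g₁ · det y = det g₁`.
-/

open Matrix

lemma exists_det_ne_zero_mul_eq_mul_of_trace_eq_zero_of_det_eq_zero {k : Type*} [Field k]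
    {u : Matrix (Fin 2) (Fin 2) k} (htr : u.trace = 0) (hdet : u.det = 0) (hu : u ≠ 0) :
    ∃ P : Matrix (Fin 2) (Fin 2) k, P.det ≠ 0 ∧ u * P = P * !![0, -1; 0, 0] := by
  obtain ⟨a, b, c, d, rfl⟩ : ∃ a b c d, u = !![a, b; c, d] := ⟨_, _, _, _, eta_fin_two u⟩
  rw [trace_fin_two_of] at htr
  rw [det_fin_two_of] at hdet
  obtain rfl : d = -a := by linear_combination htr
  -- The columns of `P` are `-u v` and `v`, for a basis vector `v` with `u v ≠ 0`.
  by_cases hc : c = 0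
  · subst hc
    obtain rfl : a = 0 := pow_eq_zero_iff two_ne_zero |>.mp (by linear_combination -hdet)
    have hb : b ≠ 0 := by
      rintro rfl
      exact hu (by ext i j; fin_cases i <;> fin_cases j <;> simp)
    refine ⟨!![-b, 0; 0, 1], by simpa [det_fin_two_of] using hb, ?_⟩
    rw [mul_fin_two, mul_fin_two]
    simp
  · refine ⟨!![-a, 1; -c, 0], by simpa [det_fin_two_of] using hc, ?_⟩
    rw [mul_fin_two, mul_fin_two]
    ext i j; fin_cases i <;> fin_cases j <;> simp
    · linear_combination hdet
    · ring

lemma exists_units_conj_eq_of_trace_eq_zero_of_det_eq_zero {k : Type*} [Field k]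
    {u : Matrix (Fin 2) (Fin 2) k} (htr : u.trace = 0) (hdet : u.det = 0) (hu : u ≠ 0) :
    ∃ P : (Matrix (Fin 2) (Fin 2) k)ˣ, P⁻¹.val * u * P.val = !![0, -1; 0, 0] := by
  obtain ⟨P, hPdet, hP⟩ := exists_det_ne_zero_mul_eq_mul_of_trace_eq_zero_of_det_eq_zero htr hdet hu
  obtain ⟨P, rfl⟩ : IsUnit P := (isUnit_iff_isUnit_det P).mpr hPdet.isUnit
  exact ⟨P, by rw [mul_assoc, hP, Units.inv_mul_cancel_left]⟩

theorem transitive_action_on_X₁_general {k : Type*} [Field k]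
    (x y : Matrix (Fin 2) (Fin 2) k) (hxdet : x.det = 0) (hx0 : x ≠ 0)
    (hxy : (x * y.adjugate).trace = 0) (hydet : y.det = -1) :
    ∃ g₁ g₂ : (Matrix (Fin 2) (Fin 2) k)ˣ,
      (g₁.val).det = (g₂.val).det ∧
      g₁.val * x * (g₂⁻¹).val = !![0, -1; 0, 0] ∧
      g₁.val * y * (g₂⁻¹).val = !![-1, 0; 0, 1] := by
  obtain ⟨Y, rfl⟩ : IsUnit y := (isUnit_iff_isUnit_det y).mpr (by simp [hydet])
  set u := x * Y⁻¹.val with hu_def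
  have hu_tr : u.trace = 0 := by
    rw [hu_def, coe_units_inv, inv_def, mul_smul_comm, trace_smul, hxy, smul_zero]
  have hu_det : u.det = 0 := by rw [hu_def, det_mul, hxdet, zero_mul]
  have hu : u ≠ 0 := fun h ↦ hx0 <| by rw [← Units.inv_mul_cancel_right x Y, ← hu_def, h, zero_mul]
  obtain ⟨P, hP⟩ := exists_units_conj_eq_of_trace_eq_zero_of_det_eq_zero hu_tr hu_det hu
  let S : (Matrix (Fin 2) (Fin 2) k)ˣ :=
    ⟨!![-1, 0; 0, 1], !![-1, 0; 0, 1], by rw [mul_fin_two, one_fin_two]; simp,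
      by rw [mul_fin_two, one_fin_two]; simp⟩
  refine ⟨P⁻¹, S * P⁻¹ * Y, ?_, ?_, ?_⟩
  · rw [Units.val_mul, Units.val_mul, det_mul, det_mul, hydet]
    simp [S, det_fin_two_of]
  · calc P⁻¹.val * x * (S * P⁻¹ * Y)⁻¹.val = P⁻¹.val * u * P.val * S⁻¹.val := by
          simp only [_root_.mul_inv_rev, inv_inv, Units.val_mul, hu_def, mul_assoc]
      _ = !![0, -1; 0, 0] * !![-1, 0; 0, 1] := by rw [hP]; rfl
      _ = !![0, -1; 0, 0] := by rw [mul_fin_two]; simp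
  · have hY : P⁻¹ * Y * (S * P⁻¹ * Y)⁻¹ = S⁻¹ := by group
    rw [← Units.val_mul, ← Units.val_mul, hY]
    rfl

theorem transitive_action_on_X₁ {k : Type*} [Field k] (hchar : ringChar k ≠ 2)
    (x y : Matrix (Fin 2) (Fin 2) k) (hxdet : x.det = 0) (hx0 : x ≠ 0)
    (hxy : (x * y.adjugate).trace = 0) (hydet : y.det = -1) :
    ∃ g₁ g₂ : (Matrix (Fin 2) (Fin 2) k)ˣ,
      (g₁.val).det = (g₂.val).det ∧
      g₁.val * x * (g₂⁻¹).val = !![0, -1; 0, 0] ∧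
      g₁.val * y * (g₂⁻¹).val = !![-1, 0; 0, 1] :=
  transitive_action_on_X₁_general x y hxdet hx0 hxy hydet
end

section
/- Let k be a field of characteristic different from 2. Set x₀ = [[0,-1],[0,0]] and y₀ = [[-1,0],[0,1]] in M₂(k). For g₁, g₂ ∈ GL₂(k), the equations g₁ x₀ g₂⁻¹ = x₀ and g₁ y₀ g₂⁻¹ = y₀ hold if and only if there exist a ∈ k^× and b ∈ k such that g₁ = [[a,b],[0,a]] and g₂ = [[a,-b],[0,a]]. In particular, any such pair automatically satisfies det g₁ = det g₂. -/
open Matrix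

theorem stabilizer_of_base_point {k : Type*} [Field k] (hchar : ringChar k ≠ 2)
    (g₁ g₂ : (Matrix (Fin 2) (Fin 2) k)ˣ) :
    ((g₁.val * !![0, -1; 0, 0] * (g₂⁻¹).val = !![0, -1; 0, 0] ∧
        g₁.val * !![-1, 0; 0, 1] * (g₂⁻¹).val = !![-1, 0; 0, 1]) ↔
      ∃ a b : k, a ≠ 0 ∧ g₁.val = !![a, b; 0, a] ∧ g₂.val = !![a, -b; 0, a]) ∧
    (g₁.val * !![0, -1; 0, 0] * (g₂⁻¹).val = !![0, -1; 0, 0] →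
      g₁.val * !![-1, 0; 0, 1] * (g₂⁻¹).val = !![-1, 0; 0, 1] →
      (g₁.val).det = (g₂.val).det) := by
  have key : ∀ M : Matrix (Fin 2) (Fin 2) k,
      g₁.val * M * (g₂⁻¹).val = M ↔ g₁.val * M = M * g₂.val := by
    intro M
    constructor
    · intro h
      have h' : g₁.val * M * ((g₂⁻¹).val * g₂.val) = M * g₂.val := by
        rw [← mul_assoc, h]
      rwa [Units.inv_mul, mul_one] at h'
    · intro h
      have h' : g₁.val * M * (g₂⁻¹).val = M * (g₂.val * (g₂⁻¹).val) := by
        rw [← mul_assoc, h]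
      rwa [Units.mul_inv, mul_one] at h'
  have main : (g₁.val * !![0, -1; 0, 0] * (g₂⁻¹).val = !![0, -1; 0, 0] ∧
        g₁.val * !![-1, 0; 0, 1] * (g₂⁻¹).val = !![-1, 0; 0, 1]) ↔
      ∃ a b : k, a ≠ 0 ∧ g₁.val = !![a, b; 0, a] ∧ g₂.val = !![a, -b; 0, a] := by
    rw [key, key]
    constructor
    · rintro ⟨h1, h2⟩
      have t1 : g₁.val 1 0 = 0 := by
        have := congrFun (congrFun h1 1) 1
        simpa [Matrix.mul_apply, Fin.sum_univ_two] using this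
      have t2 : g₂.val 1 0 = 0 := by
        have := congrFun (congrFun h1 0) 0
        simpa [Matrix.mul_apply, Fin.sum_univ_two, eq_comm] using this
      have t3 : g₂.val 1 1 = g₁.val 0 0 := by
        have := congrFun (congrFun h1 0) 1
        simpa [Matrix.mul_apply, Fin.sum_univ_two, eq_comm] using this
      have t4 : g₂.val 0 0 = g₁.val 0 0 := by
        have := congrFun (congrFun h2 0) 0
        simpa [Matrix.mul_apply, Fin.sum_univ_two, eq_comm] using this
      have t5 : g₂.val 0 1 = -(g₁.val 0 1) := by
        have := congrFun (congrFun h2 0) 1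
        simpa [Matrix.mul_apply, Fin.sum_univ_two, eq_comm, neg_eq_iff_eq_neg] using this
      have t6 : g₁.val 1 1 = g₁.val 0 0 := by
        have := congrFun (congrFun h2 1) 1
        simpa [Matrix.mul_apply, Fin.sum_univ_two, t3] using this
      refine ⟨g₁.val 0 0, g₁.val 0 1, ?_, ?_, ?_⟩
      · have hdet : (g₁.val).det ≠ 0 := by
          have : IsUnit (g₁.val).det := (Matrix.isUnit_iff_isUnit_det _).mp g₁.isUnit
          exact this.ne_zero
        rw [Matrix.det_fin_two, t1, t6] at hdet
        intro h0
        apply hdet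
        rw [h0]; ring
      · conv_lhs => rw [Matrix.eta_fin_two g₁.val]
        rw [t1, t6]
      · conv_lhs => rw [Matrix.eta_fin_two g₂.val]
        rw [t2, t3, t4, t5]
    · rintro ⟨a, b, ha, h1, h2⟩
      rw [h1, h2]
      constructor <;> · ext i j; fin_cases i <;> fin_cases j <;>
        simp [Matrix.mul_apply, Fin.sum_univ_two]
  refine ⟨main, fun hx hy => ?_⟩
  obtain ⟨a, b, ha, h1, h2⟩ := main.mp ⟨hx, hy⟩
  rw [h1, h2]
  simp [Matrix.det_fin_two_of]
end

section
/- Let q > 1 be a real number, ε ∈ {1, -1}, and let α be a complex number with α² ≠ 1 and q^{-3/2} < |α| < q^{3/2}. Set A = (1 - α⁻²q⁻¹)/(1 - α⁻²) and B = (1 - α²q⁻¹)/(1 - α²), and define Z₁ = Σ_{n ∈ ℤ} (q^{-4|n|-2} - q^{-2|n|-2|n-1|-2}), Z₂ = (q⁻² - q⁻⁴) Σ_{m=1}^{∞} ε^m q^{-3m/2} (α^m A + α^{-m} B), Z₃ = (q⁻² - q⁻⁴) Σ_{n=1}^{∞} Σ_{m=n+1}^{∞} ε^{n+m} q^{-5n/2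 - 3m/2} (α^{m-n} A + α^{n-m} B), and Z₄ = (q⁻² - 1) Σ_{m=1}^{∞} Σ_{n=m+1}^{∞} ε^{n+m} q^{-3n/2 - 5m/2} (α^{n-m} A + α^{-n+m} B). Then all the series converge absolutely and Z₁ + Z₂ + Z₃ + Z₄ = q⁻² (1 - q⁻²)² (1 - ε α q^{-3/2})⁻¹ (1 - ε α⁻¹ q^{-3/2})⁻¹. -/
/-!
With `s = q^{-1/2}` every summand is a monomial in `s`. The series `Z₁` is a two-sided geometric
series with sum `s⁴(1 - s⁴)² / (1 - s⁸)`, and `Z₂ = A X/(1 - X) + B Y/(1 - Y)` with `X = ε α s³`,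
`Y = ε α⁻¹ s³`. Because `ε² = 1`, the summands of `Z₃` and `Z₄` both split as `(s⁸)ⁿ` times a
summand of `Z₂`, so `Z₃ = Z₄ = s⁸/(1 - s⁸) · Z₂` and the total is `s⁴(1 - s⁴)²/(1 - s⁸) · (1 + Z₂)`.
The rational identity `1 + Z₂ = (1 - s⁸) / ((1 - X)(1 - Y))` then gives the closed form.
-/

open MeasureTheory Real

theorem hasSum_pow_succ_of_norm_lt_one {K : Type*} [NormedField K] {ξ : K} (h : ‖ξ‖ < 1) :
    HasSum (fun n : ℕ ↦ ξ ^ (n + 1)) (ξ / (1 - ξ)) := by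
  simpa [pow_succ', div_eq_mul_inv] using (hasSum_geometric_of_norm_lt_one h).mul_left ξ

theorem HasSum.mul_of_rclike {𝕜 ι κ : Type*} [RCLike 𝕜] {f : ι → 𝕜} {g : κ → 𝕜} {a b : 𝕜}
    (hf : HasSum f a) (hg : HasSum g b) : HasSum (fun p : ι × κ ↦ f p.1 * g p.2) (a * b) :=
  hf.mul hg <| summable_mul_of_summable_norm (summable_norm_iff.2 hf.summable)
    (summable_norm_iff.2 hg.summable)

theorem one_add_weighted_geom_sum_eq {K : Type*} [Field K] {ε α t A B : K} (hε : ε ^ 2 = 1)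
    (hα0 : α ≠ 0) (hα : α ^ 2 ≠ 1) (hX : 1 - ε * α * t ^ 3 ≠ 0) (hY : 1 - ε * α⁻¹ * t ^ 3 ≠ 0)
    (hA : A = (1 - α ^ (-2 : ℤ) * t ^ 2) / (1 - α ^ (-2 : ℤ)))
    (hB : B = (1 - α ^ 2 * t ^ 2) / (1 - α ^ 2)) :
    1 + (A * (ε * α * t ^ 3 / (1 - ε * α * t ^ 3)) +
        B * (ε * α⁻¹ * t ^ 3 / (1 - ε * α⁻¹ * t ^ 3)))
      = (1 - t ^ 8) / ((1 - ε * α * t ^ 3) * (1 - ε * α⁻¹ * t ^ 3)) := by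
  rw [eq_div_iff (mul_ne_zero hX hY)]
  calc _ = (1 - ε * α * t ^ 3) * (1 - ε * α⁻¹ * t ^ 3)
        + A * (ε * α * t ^ 3) * (1 - ε * α⁻¹ * t ^ 3)
        + B * (ε * α⁻¹ * t ^ 3) * (1 - ε * α * t ^ 3) := by
        generalize ε * α * t ^ 3 = X at hX ⊢
        generalize ε * α⁻¹ * t ^ 3 = Y at hY ⊢
        field_simp
        ring
    _ = 1 - t ^ 8 := by
      have h1 : 1 - α ^ 2 ≠ 0 := sub_ne_zero.mpr (Ne.symm hα)
      rw [hA, hB, zpow_neg, zpow_ofNat]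
      field_simp
      linear_combination (α * t ^ 8 * (1 - α ^ 2) ^ 2) * hε

noncomputable def zetaOneTerm (q : ℝ) (n : ℤ) : ℝ :=
  q ^ (-4 * |(n : ℝ)| - 2) - q ^ (-2 * |(n : ℝ)| - 2 * |(n : ℝ) - 1| - 2)

noncomputable def zetaTwoTerm (q : ℝ) (ε α A B : ℂ) (m : ℕ) : ℂ :=
  ε ^ (m + 1) * ((q ^ (-(3 * ((m : ℝ) + 1)) / 2) : ℝ) : ℂ) *
    (α ^ (m + 1) * A + α ^ (-((m : ℤ) + 1)) * B)

-- `p` stands for the pair `(n, m) = (p.1 + 1, p.1 + p.2 + 2)` with `1 ≤ n < m`.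
noncomputable def zetaThreeTerm (q : ℝ) (ε α A B : ℂ) (p : ℕ × ℕ) : ℂ :=
  ε ^ ((p.1 + 1) + (p.1 + p.2 + 2)) *
    ((q ^ (-(5 * ((p.1 : ℝ) + 1)) / 2 - 3 * ((p.1 : ℝ) + (p.2 : ℝ) + 2) / 2) : ℝ) : ℂ) *
    (α ^ (p.2 + 1) * A + α ^ (-((p.2 : ℤ) + 1)) * B)

-- `p` stands for the pair `(m, n) = (p.1 + 1, p.1 + p.2 + 2)` with `1 ≤ m < n`.
noncomputable def zetaFourTerm (q : ℝ) (ε α A B : ℂ) (p : ℕ × ℕ) : ℂ :=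
  ε ^ ((p.1 + p.2 + 2) + (p.1 + 1)) *
    ((q ^ (-(3 * ((p.1 : ℝ) + (p.2 : ℝ) + 2)) / 2 - 5 * ((p.1 : ℝ) + 1) / 2) : ℝ) : ℂ) *
    (α ^ (p.2 + 1) * A + α ^ (-((p.2 : ℤ) + 1)) * B)

section ZetaSeries

variable {q s : ℝ} {ε α A B : ℂ}

theorem rpow_eq_pow_of_eq_neg_half (hq : 0 ≤ q) (hs : q ^ (-(1 : ℝ) / 2) = s) (k : ℕ) {x : ℝ}
    (hx : x = -(k : ℝ) / 2) : q ^ x = s ^ k := by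
  rw [← hs, ← rpow_mul_natCast hq, hx]
  ring_nf

theorem zetaOneTerm_natCast_succ (hq : 0 ≤ q) (hs : q ^ (-(1 : ℝ) / 2) = s) (n : ℕ) :
    zetaOneTerm q ((n + 1 : ℕ) : ℤ) = (s ^ 4 - 1) * (s ^ 8) ^ (n + 1) := by
  have hn : (0 : ℝ) ≤ n := n.cast_nonneg
  rw [zetaOneTerm, Int.cast_natCast, Nat.cast_succ, add_sub_cancel_right, abs_of_nonneg hn,
    abs_of_nonneg (by positivity),
    rpow_eq_pow_of_eq_neg_half hq hs (8 * n + 12) (by push_cast; ring),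
    rpow_eq_pow_of_eq_neg_half hq hs (8 * n + 8) (by push_cast; ring)]
  ring

theorem zetaOneTerm_zero (hq : 0 ≤ q) (hs : q ^ (-(1 : ℝ) / 2) = s) :
    zetaOneTerm q 0 = s ^ 4 - s ^ 8 := by
  rw [zetaOneTerm, Int.cast_zero, abs_zero, zero_sub, abs_neg, abs_one,
    rpow_eq_pow_of_eq_neg_half hq hs 4 (by norm_num),
    rpow_eq_pow_of_eq_neg_half hq hs 8 (by norm_num)]

theorem zetaOneTerm_neg_succ (hq : 0 ≤ q) (hs : q ^ (-(1 : ℝ) / 2) = s) (n : ℕ) :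
    zetaOneTerm q (-((n : ℤ) + 1)) = (s ^ 4 - s ^ 8) * (s ^ 8) ^ (n + 1) := by
  have hn : (0 : ℝ) ≤ n := n.cast_nonneg
  rw [zetaOneTerm, Int.cast_neg, Int.cast_add, Int.cast_natCast, Int.cast_one, abs_neg,
    ← neg_add', abs_neg, abs_of_nonneg (by positivity), abs_of_nonneg (by positivity),
    rpow_eq_pow_of_eq_neg_half hq hs (8 * n + 12) (by push_cast; ring),
    rpow_eq_pow_of_eq_neg_half hq hs (8 * n + 16) (by push_cast; ring)]
  ring

theorem hasSum_zetaOneTerm (hq : 0 ≤ q) (hs : q ^ (-(1 : ℝ) / 2) = s) (hs1 : s < 1) :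
    HasSum (zetaOneTerm q) (s ^ 4 * (1 - s ^ 4) ^ 2 / (1 - s ^ 8)) := by
  have hs0 : 0 ≤ s := hs ▸ rpow_nonneg hq _
  have hs8 : s ^ 8 < 1 := pow_lt_one₀ hs0 hs1 (by norm_num)
  have hgeom :=
    hasSum_pow_succ_of_norm_lt_one (ξ := s ^ 8) (by rwa [norm_of_nonneg (by positivity)])
  have hnat : HasSum (fun n : ℕ ↦ zetaOneTerm q n)
      ((s ^ 4 - 1) * (s ^ 8 / (1 - s ^ 8)) + (s ^ 4 - s ^ 8)) := by
    rw [← hasSum_nat_add_iff' 1, Finset.sum_range_one, Nat.cast_zero, zetaOneTerm_zero hq hs,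
      add_sub_cancel_right]
    simpa only [zetaOneTerm_natCast_succ hq hs] using hgeom.mul_left (s ^ 4 - 1)
  have hneg : HasSum (fun n : ℕ ↦ zetaOneTerm q (-(n + 1)))
      ((s ^ 4 - s ^ 8) * (s ^ 8 / (1 - s ^ 8))) := by
    simpa only [zetaOneTerm_neg_succ hq hs] using hgeom.mul_left (s ^ 4 - s ^ 8)
  convert hnat.of_nat_of_neg_add_one hneg using 1
  have : 1 - s ^ 8 ≠ 0 := by linarith
  field_simp
  ring

theorem zetaTwoTerm_eq (hq : 0 ≤ q) (hs : q ^ (-(1 : ℝ) / 2) = s) (m : ℕ) :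
    zetaTwoTerm q ε α A B m =
      A * (ε * α * s ^ 3) ^ (m + 1) + B * (ε * α⁻¹ * s ^ 3) ^ (m + 1) := by
  rw [zetaTwoTerm, rpow_eq_pow_of_eq_neg_half hq hs (3 * (m + 1)) (by push_cast; ring),
    show -((m : ℤ) + 1) = -((m + 1 : ℕ) : ℤ) by push_cast; ring, zpow_neg, zpow_natCast, ← inv_pow]
  push_cast
  ring

theorem hasSum_zetaTwoTerm (hq : 0 ≤ q) (hs : q ^ (-(1 : ℝ) / 2) = s)
    (hX : ‖ε * α * s ^ 3‖ < 1) (hY : ‖ε * α⁻¹ * s ^ 3‖ < 1) :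
    HasSum (zetaTwoTerm q ε α A B)
      (A * (ε * α * s ^ 3 / (1 - ε * α * s ^ 3)) +
        B * (ε * α⁻¹ * s ^ 3 / (1 - ε * α⁻¹ * s ^ 3))) := by
  simpa only [← zetaTwoTerm_eq hq hs] using ((hasSum_pow_succ_of_norm_lt_one hX).mul_left A).add
    ((hasSum_pow_succ_of_norm_lt_one hY).mul_left B)

theorem zetaThreeTerm_eq (hq : 0 ≤ q) (hs : q ^ (-(1 : ℝ) / 2) = s) (hε : ε ^ 2 = 1)
    (p : ℕ × ℕ) :
    zetaThreeTerm q ε α A B p = ((s : ℂ) ^ 8) ^ (p.1 + 1) * zetaTwoTerm q ε α A B p.2 := by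
  rw [zetaThreeTerm, zetaTwoTerm,
    show (p.1 + 1) + (p.1 + p.2 + 2) = 2 * (p.1 + 1) + (p.2 + 1) by ring,
    pow_add, pow_mul, hε, one_pow, one_mul,
    rpow_eq_pow_of_eq_neg_half hq hs (8 * (p.1 + 1) + 3 * (p.2 + 1)) (by push_cast; ring),
    rpow_eq_pow_of_eq_neg_half hq hs (3 * (p.2 + 1)) (by push_cast; ring)]
  push_cast
  ring

theorem zetaFourTerm_eq_zetaThreeTerm : zetaFourTerm q ε α A B = zetaThreeTerm q ε α A B := by
  funext p
  rw [zetaFourTerm, zetaThreeTerm, add_comm (p.1 + p.2 + 2)]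
  ring_nf

theorem hasSum_zetaThreeTerm (hq : 0 ≤ q) (hs : q ^ (-(1 : ℝ) / 2) = s) (hs1 : s < 1)
    (hε : ε ^ 2 = 1) {G : ℂ} (hG : HasSum (zetaTwoTerm q ε α A B) G) :
    HasSum (zetaThreeTerm q ε α A B) ((s : ℂ) ^ 8 / (1 - (s : ℂ) ^ 8) * G) := by
  have hs0 : 0 ≤ s := hs ▸ rpow_nonneg hq _
  have hs8 : ‖(s : ℂ) ^ 8‖ < 1 := by
    rw [norm_pow, Complex.norm_real, norm_of_nonneg hs0]; exact pow_lt_one₀ hs0 hs1 (by norm_num)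
  rw [funext (zetaThreeTerm_eq hq hs hε)]
  exact (hasSum_pow_succ_of_norm_lt_one hs8).mul_of_rclike hG

theorem norm_satake_mul_lt_one (hq : 0 < q) (hs : q ^ (-(1 : ℝ) / 2) = s) (hε : ‖ε‖ = 1)
    (hα : ‖α‖ < q ^ ((3 : ℝ) / 2)) : ‖ε * α * s ^ 3‖ < 1 := by
  have hs3 : s ^ 3 = q ^ (-(3 : ℝ) / 2) :=
    (rpow_eq_pow_of_eq_neg_half hq.le hs 3 (by norm_num)).symm
  rw [norm_mul, norm_mul, hε, one_mul, norm_pow, Complex.norm_real,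
    norm_of_nonneg (hs ▸ rpow_nonneg hq.le _), hs3, ← lt_div_iff₀ (rpow_pos_of_pos hq _),
    one_div, ← rpow_neg hq.le, neg_div, neg_neg]
  exact hα

theorem norm_satake_inv_mul_lt_one (hq : 0 ≤ q) (hs : q ^ (-(1 : ℝ) / 2) = s) (hε : ‖ε‖ = 1)
    (hα : q ^ (-(3 : ℝ) / 2) < ‖α‖) : ‖ε * α⁻¹ * s ^ 3‖ < 1 := by
  have hs3 : s ^ 3 = q ^ (-(3 : ℝ) / 2) := (rpow_eq_pow_of_eq_neg_half hq hs 3 (by norm_num)).symm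
  have hα0 : 0 < ‖α‖ := (rpow_nonneg hq _).trans_lt hα
  rw [norm_mul, norm_mul, hε, one_mul, norm_inv, norm_pow, Complex.norm_real,
    norm_of_nonneg (hs ▸ rpow_nonneg hq _), hs3, inv_mul_lt_one₀ hα0]
  exact hα

theorem tsum_zetaTerms_combination_eq (hq : 0 ≤ q) (hs : q ^ (-(1 : ℝ) / 2) = s) (hs1 : s < 1)
    (hε : ε ^ 2 = 1) (hα0 : α ≠ 0) (hα : α ^ 2 ≠ 1) (hX : ‖ε * α * s ^ 3‖ < 1)
    (hY : ‖ε * α⁻¹ * s ^ 3‖ < 1)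
    (hA : A = (1 - α ^ (-2 : ℤ) * (s : ℂ) ^ 2) / (1 - α ^ (-2 : ℤ)))
    (hB : B = (1 - α ^ 2 * (s : ℂ) ^ 2) / (1 - α ^ 2)) :
    ((∑' n, zetaOneTerm q n : ℝ) : ℂ) + ((s ^ 4 - s ^ 8 : ℝ) : ℂ) * ∑' m, zetaTwoTerm q ε α A B m
      + ((s ^ 4 - s ^ 8 : ℝ) : ℂ) * ∑' p, zetaThreeTerm q ε α A B p
      + ((s ^ 4 - 1 : ℝ) : ℂ) * ∑' p, zetaFourTerm q ε α A B p
      = ((s ^ 4 * (1 - s ^ 4) ^ 2 : ℝ) : ℂ) * (1 - ε * α * ((s ^ 3 : ℝ) : ℂ))⁻¹ *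
        (1 - ε * α⁻¹ * ((s ^ 3 : ℝ) : ℂ))⁻¹ := by
  have hZ2 := hasSum_zetaTwoTerm (A := A) (B := B) hq hs hX hY
  rw [(hasSum_zetaOneTerm hq hs hs1).tsum_eq, hZ2.tsum_eq, zetaFourTerm_eq_zetaThreeTerm,
    (hasSum_zetaThreeTerm hq hs hs1 hε hZ2).tsum_eq]
  have hs8 : (1 : ℂ) - (s : ℂ) ^ 8 ≠ 0 := by
    exact_mod_cast (sub_pos.mpr (pow_lt_one₀ (hs ▸ rpow_nonneg hq _) hs1 (by norm_num))).ne'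
  have hX1 := (isUnit_one_sub_of_norm_lt_one hX).ne_zero
  have hY1 := (isUnit_one_sub_of_norm_lt_one hY).ne_zero
  have key := one_add_weighted_geom_sum_eq hε hα0 hα hX1 hY1 hA hB
  push_cast
  generalize A * (ε * α * s ^ 3 / (1 - ε * α * s ^ 3)) +
    B * (ε * α⁻¹ * s ^ 3 / (1 - ε * α⁻¹ * s ^ 3)) = G at key ⊢
  calc _ = (s : ℂ) ^ 4 * (1 - (s : ℂ) ^ 4) ^ 2 / (1 - (s : ℂ) ^ 8) * (1 + G) := by
        field_simp; ring
    _ = _ := by rw [key]; field_simp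

end ZetaSeries

theorem local_doubling_zeta_ramified (q : ℝ) (hq : 1 < q) (ε : ℂ) (hε : ε = 1 ∨ ε = -1)
    (α : ℂ) (hα : α ^ 2 ≠ 1)
    (hαl : q ^ (-(3 : ℝ) / 2) < norm α) (hαu : norm α < q ^ ((3 : ℝ) / 2))
    (A B : ℂ)
    (hA : A = (1 - α ^ (-2 : ℤ) * ((q : ℂ))⁻¹) / (1 - α ^ (-2 : ℤ)))
    (hB : B = (1 - α ^ 2 * ((q : ℂ))⁻¹) / (1 - α ^ 2)) :
    Summable (fun n : ℤ =>
      |q ^ (-4 * |(n : ℝ)| - 2) - q ^ (-2 * |(n : ℝ)| - 2 * |(n : ℝ) - 1| - 2)|) ∧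
    Summable (fun m : ℕ => norm
      (ε ^ (m + 1) * ((q ^ (-(3 * ((m : ℝ) + 1)) / 2) : ℝ) : ℂ) *
        (α ^ (m + 1) * A + α ^ (-((m : ℤ) + 1)) * B))) ∧
    Summable (fun p : ℕ × ℕ => norm
      (ε ^ ((p.1 + 1) + (p.1 + p.2 + 2)) *
        ((q ^ (-(5 * ((p.1 : ℝ) + 1)) / 2 - 3 * ((p.1 : ℝ) + (p.2 : ℝ) + 2) / 2) : ℝ) : ℂ) *
        (α ^ (p.2 + 1) * A + α ^ (-((p.2 : ℤ) + 1)) * B))) ∧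
    Summable (fun p : ℕ × ℕ => norm
      (ε ^ ((p.1 + p.2 + 2) + (p.1 + 1)) *
        ((q ^ (-(3 * ((p.1 : ℝ) + (p.2 : ℝ) + 2)) / 2 - 5 * ((p.1 : ℝ) + 1) / 2) : ℝ) : ℂ) *
        (α ^ (p.2 + 1) * A + α ^ (-((p.2 : ℤ) + 1)) * B))) ∧
    (((∑' n : ℤ, (q ^ (-4 * |(n : ℝ)| - 2) - q ^ (-2 * |(n : ℝ)| - 2 * |(n : ℝ) - 1| - 2)) : ℝ) : ℂ) +
      ((q ^ (-2 : ℝ) - q ^ (-4 : ℝ) : ℝ) : ℂ) *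
        (∑' m : ℕ, ε ^ (m + 1) * ((q ^ (-(3 * ((m : ℝ) + 1)) / 2) : ℝ) : ℂ) *
          (α ^ (m + 1) * A + α ^ (-((m : ℤ) + 1)) * B)) +
      ((q ^ (-2 : ℝ) - q ^ (-4 : ℝ) : ℝ) : ℂ) *
        (∑' p : ℕ × ℕ, ε ^ ((p.1 + 1) + (p.1 + p.2 + 2)) *
          ((q ^ (-(5 * ((p.1 : ℝ) + 1)) / 2 - 3 * ((p.1 : ℝ) + (p.2 : ℝ) + 2) / 2) : ℝ) : ℂ) *
          (α ^ (p.2 + 1) * A + α ^ (-((p.2 : ℤ) + 1)) * B)) +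
      ((q ^ (-2 : ℝ) - 1 : ℝ) : ℂ) *
        (∑' p : ℕ × ℕ, ε ^ ((p.1 + p.2 + 2) + (p.1 + 1)) *
          ((q ^ (-(3 * ((p.1 : ℝ) + (p.2 : ℝ) + 2)) / 2 - 5 * ((p.1 : ℝ) + 1) / 2) : ℝ) : ℂ) *
          (α ^ (p.2 + 1) * A + α ^ (-((p.2 : ℤ) + 1)) * B)) =
      ((q ^ (-2 : ℝ) * (1 - q ^ (-2 : ℝ)) ^ 2 : ℝ) : ℂ) *
        (1 - ε * α * ((q ^ (-(3 : ℝ) / 2) : ℝ) : ℂ))⁻¹ *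
        (1 - ε * α⁻¹ * ((q ^ (-(3 : ℝ) / 2) : ℝ) : ℂ))⁻¹) := by
  have hq0 : 0 ≤ q := by linarith
  obtain ⟨s, hs⟩ : ∃ s, q ^ (-(1 : ℝ) / 2) = s := ⟨_, rfl⟩
  have hs1 : s < 1 := hs ▸ rpow_lt_one_of_one_lt_of_neg hq (by norm_num)
  have hεn : ‖ε‖ = 1 := by rcases hε with rfl | rfl <;> simp
  have hε2 : ε ^ 2 = 1 := by rcases hε with rfl | rfl <;> norm_num
  have hα0 : α ≠ 0 := norm_pos_iff.mp ((rpow_nonneg hq0 _).trans_lt hαl)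
  have hX := norm_satake_mul_lt_one (by linarith) hs hεn hαu
  have hY := norm_satake_inv_mul_lt_one hq0 hs hεn hαl
  have hqinv : (q : ℂ)⁻¹ = (s : ℂ) ^ 2 := by
    exact_mod_cast (rpow_neg_one q).symm.trans (rpow_eq_pow_of_eq_neg_half hq0 hs 2 (by norm_num))
  rw [hqinv] at hA hB
  have hZ2 := hasSum_zetaTwoTerm (A := A) (B := B) hq0 hs hX hY
  have hZ3 := hasSum_zetaThreeTerm hq0 hs hs1 hε2 hZ2
  have hZ4 : Summable (zetaFourTerm q ε α A B) := zetaFourTerm_eq_zetaThreeTerm ▸ hZ3.summable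
  rw [rpow_eq_pow_of_eq_neg_half hq0 hs 4 (by norm_num),
    rpow_eq_pow_of_eq_neg_half hq0 hs 8 (by norm_num),
    rpow_eq_pow_of_eq_neg_half hq0 hs 3 (by norm_num)]
  exact ⟨(hasSum_zetaOneTerm hq0 hs hs1).summable.abs, summable_norm_iff.2 hZ2.summable,
    summable_norm_iff.2 hZ3.summable, summable_norm_iff.2 hZ4,
    tsum_zetaTerms_combination_eq hq0 hs hs1 hε2 hα0 hα hX hY hA hB⟩
end
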